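/- Theorem 1, main inequality: under the CODER iteration with F monotone and satisfying the blockwise Lipschitz assumption, and with L² = ‖∑_{i=1}^m Q̂ⁱ‖ used in the step sizes a_k = (1+γA_{k−1})/(2L), for every u ∈ ℝ^d and every k ≥ 1: ∑_{j=1}^k a_j(⟨F(x_j), x_j − u⟩ + g(x_j) − g(u)) + ((1+γA_k)/4)‖u − x_k‖² ≤ ½‖u − x₀‖². -/

import Mathlib

open scoped RealInnerProductSpace

/-- Operator norm of a square real matrix, viewed as a linear map on Euclidean space. -/
noncomputable def matOpNorm {d : ℕ} (Q : Matrix (Fin d) (Fin d) ℝ) : ℝ :=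
  ‖Matrix.toEuclideanCLM (𝕜 := ℝ) Q‖

/-- The quadratic form `vᵀ Q v` on Euclidean space. -/
noncomputable def quadForm {d : ℕ} (Q : Matrix (Fin d) (Fin d) ℝ)
    (v : EuclideanSpace ℝ (Fin d)) : ℝ :=
  ⟪v, Matrix.toEuclideanCLM (𝕜 := ℝ) Q v⟫

/-!
The iterate `x k` minimizes the dual-averaging objective `ψ k · u`, which is
`(1 + γ A k)`-strongly convex, so `ψ k (x k) u + (1 + γ A k) / 2 * ‖z - x k‖ ^ 2 ≤ ψ k z u`.
Write `e k = F (x k) - p k` for the error of the cyclic gradient. The blockwise Lipschitz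
condition gives `‖e k‖ ≤ L ‖x k - x (k - 1)‖` (the masked matrices `Q̂ⁱ` see exactly the blocks
that changed), and the extrapolation reads `a k q k = a k (F (x k) - e k) + a (k - 1) e (k - 1)`.
By induction on `k`,
`∑ a j (⟪F (x j), x j - u⟫ + G (x j) - G u) - a k ⟪e k, x k - u⟫ + a k / (2 L) ‖e k‖²`
is at most `ψ k (x k) u`: the cross term `a (k - 1) ⟪e (k - 1), x k - x (k - 1)⟫` of each step
is absorbed by Young's inequality into `a (k - 1) / (2 L) ‖e (k - 1)‖²` and half of the
strong-convexity gain `L a k ‖x k - x (k - 1)‖²`; the other half pays for the next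
`a k / (2 L) ‖e k‖²`. Comparing with `z = u` and one more Young's inequality on
`a k ⟪e k, x k - u⟫` gives the claim, since `L a (k + 1) / 2 = (1 + γ A k) / 4`.
-/

open Finset

lemma convexOn_finsetSum {E ι : Type*} [AddCommGroup E] [Module ℝ E] {s : Set E}
    (hs : Convex ℝ s) (t : Finset ι) {f : ι → E → ℝ} (hf : ∀ i ∈ t, ConvexOn ℝ s (f i)) :
    ConvexOn ℝ s fun z => ∑ i ∈ t, f i z := by
  induction t using Finset.cons_induction with
  | empty => simpa using convexOn_const (0 : ℝ) hs
  | cons i t hi ih =>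
    simp only [sum_cons]
    exact (hf i (mem_cons_self i t)).add (ih fun j hj => hf j (mem_cons_of_mem hj))

theorem StrongConvexOn.add_sq_norm_sub_le_of_isMinOn {E : Type*} [NormedAddCommGroup E]
    [NormedSpace ℝ E] {s : Set E} {f : E → ℝ} {m : ℝ} {x u : E}
    (hf : StrongConvexOn s m f) (hx : x ∈ s) (hu : u ∈ s) (hmin : IsMinOn f s x) :
    f x + m / 2 * ‖u - x‖ ^ 2 ≤ f u := by
  set c := m / 2 * ‖u - x‖ ^ 2 with hc
  have hstep : ∀ b ∈ Set.Ioo (0 : ℝ) 1, f x ≤ f u - (1 - b) * c := by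
    rintro b ⟨hb0, hb1⟩
    have hconv := hf.2 hx hu (by linarith : 0 ≤ 1 - b) hb0.le (by ring)
    have hle : f x ≤ f ((1 - b) • x + b • u) := hmin (hf.1 hx hu (by linarith) hb0.le (by ring))
    simp only [smul_eq_mul, norm_sub_rev x u, ← hc] at hconv
    have : b * f x ≤ b * (f u - (1 - b) * c) := by linarith
    exact le_of_mul_le_mul_left this hb0
  have hlim : Filter.Tendsto (fun b : ℝ => f u - (1 - b) * c) (nhdsWithin 0 (Set.Ioi 0))
      (nhds (f u - c)) := by
    have : Continuous fun b : ℝ => f u - (1 - b) * c := by fun_prop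
    simpa using (this.tendsto 0).mono_left nhdsWithin_le_nhds
  have := ge_of_tendsto hlim (Filter.eventually_of_mem (Ioo_mem_nhdsGT one_pos) hstep)
  linarith

theorem StrongConvexOn.dualAveragingObjective {E : Type*} [NormedAddCommGroup E]
    [InnerProductSpace ℝ E] {G : E → ℝ} {γ : ℝ}
    (hG : StrongConvexOn Set.univ γ G) {a : ℕ → ℝ} (ha : ∀ j, 0 ≤ a j) (q : ℕ → E)
    (x₀ u : E) (n : ℕ) :
    StrongConvexOn Set.univ (1 + γ * ∑ j ∈ Icc 1 n, a j)
      (fun z => ∑ j ∈ Icc 1 n, a j * (⟪q j, z - u⟫ + G z - G u) + 1 / 2 * ‖z - x₀‖ ^ 2) := by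
  rw [strongConvexOn_iff_convex] at hG ⊢
  have haffine : ConvexOn ℝ Set.univ fun z =>
      ⟪∑ j ∈ Icc 1 n, a j • q j - x₀, z⟫
        + (1 / 2 * ‖x₀‖ ^ 2 - ∑ j ∈ Icc 1 n, a j * (⟪q j, u⟫ + G u)) :=
    ((innerₛₗ ℝ (∑ j ∈ Icc 1 n, a j • q j - x₀)).convexOn convex_univ).add_const _
  refine ((hG.smul (sum_nonneg fun j (_ : j ∈ Icc 1 n) => ha j)).add haffine).congr fun z _ => ?_
  simp only [Pi.add_apply, smul_eq_mul, inner_sub_left, inner_sub_right, sum_inner,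
    real_inner_smul_left, norm_sub_sq_real, mul_add, mul_sub, sum_add_distrib, sum_sub_distrib,
    ← sum_mul, real_inner_comm x₀ z]
  ring

section QuadForm

variable {d : ℕ}

lemma quadForm_eq_sum (Q : Matrix (Fin d) (Fin d) ℝ) (v : EuclideanSpace ℝ (Fin d)) :
    quadForm Q v = ∑ j, ∑ k, v j * Q j k * v k := by
  have hQv : ∀ j, (Matrix.toEuclideanCLM (𝕜 := ℝ) Q v) j = ∑ k, Q j k * v k := fun _ => rfl
  simp only [quadForm, PiLp.inner_apply, hQv, RCLike.inner_apply, conj_trivial, sum_mul]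
  exact sum_congr rfl fun j _ => sum_congr rfl fun k _ => by ring

lemma quadForm_sum {ι : Type*} (s : Finset ι) (Q : ι → Matrix (Fin d) (Fin d) ℝ)
    (v : EuclideanSpace ℝ (Fin d)) : quadForm (∑ i ∈ s, Q i) v = ∑ i ∈ s, quadForm (Q i) v := by
  simp only [quadForm, map_sum, FunLike.coe_sum, Finset.sum_apply, inner_sum]

lemma quadForm_le_matOpNorm_mul (Q : Matrix (Fin d) (Fin d) ℝ) (v : EuclideanSpace ℝ (Fin d)) :
    quadForm Q v ≤ matOpNorm Q * ‖v‖ ^ 2 :=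
  calc quadForm Q v ≤ ‖v‖ * ‖Matrix.toEuclideanCLM (𝕜 := ℝ) Q v‖ := real_inner_le_norm _ _
    _ ≤ ‖v‖ * (matOpNorm Q * ‖v‖) := by gcongr; exact ContinuousLinearMap.le_opNorm _ _
    _ = matOpNorm Q * ‖v‖ ^ 2 := by ring

lemma quadForm_eq_of_mask (P : Fin d → Prop) [DecidablePred P]
    {Q Qm : Matrix (Fin d) (Fin d) ℝ} (hQm : ∀ j k, Qm j k = if P j ∧ P k then Q j k else 0)
    {v w : EuclideanSpace ℝ (Fin d)} (hv : ∀ j, v j = if P j then w j else 0) :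
    quadForm Q v = quadForm Qm w := by
  simp only [quadForm_eq_sum, hv, hQm]
  refine sum_congr rfl fun j _ => sum_congr rfl fun k _ => ?_
  by_cases hj : P j <;> by_cases hk : P k <;> simp [hj, hk]

end QuadForm

section CyclicGradient

variable {d m : ℕ} {blk : Fin d → Fin m}
  {F : EuclideanSpace ℝ (Fin d) → EuclideanSpace ℝ (Fin d)}
  {Q Qhat : Fin m → Matrix (Fin d) (Fin d) ℝ}
  {z z' p : EuclideanSpace ℝ (Fin d)}

lemma sum_block_sq_le_quadForm_masked
    (hlip : ∀ (i : Fin m) (z w : EuclideanSpace ℝ (Fin d)),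
      ∑ j ∈ univ.filter (fun j => blk j = i), (F z j - F w j) ^ 2 ≤ quadForm (Q i) (z - w))
    (hQhat : ∀ (i : Fin m) (j k : Fin d),
      Qhat i j k = if i ≤ blk j ∧ i ≤ blk k then Q i j k else 0)
    (hp : ∀ j, p j = F (WithLp.toLp 2 fun j' => if blk j' < blk j then z j' else z' j') j)
    (i : Fin m) :
    ∑ j ∈ univ.filter (fun j => blk j = i), (F z j - p j) ^ 2 ≤ quadForm (Qhat i) (z - z') := by
  set w : EuclideanSpace ℝ (Fin d) := WithLp.toLp 2 fun j' => if blk j' < i then z j' else z' j'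
  have hpw : ∀ j ∈ univ.filter (fun j => blk j = i), (F z j - p j) ^ 2 = (F z j - F w j) ^ 2 := by
    intro j hj
    rw [hp j, (mem_filter.mp hj).2]
  have hmask : quadForm (Q i) (z - w) = quadForm (Qhat i) (z - z') := by
    refine quadForm_eq_of_mask (fun j => i ≤ blk j) (hQhat i) fun j => ?_
    by_cases h : blk j < i
    · simp [w, h, not_le.mpr h]
    · simp [w, h, not_lt.mp h]
  rw [sum_congr rfl hpw, ← hmask]
  exact hlip i z w

lemma norm_sub_le_of_blockLipschitz {L : ℝ} (hL : 0 ≤ L)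
    (hlip : ∀ (i : Fin m) (z w : EuclideanSpace ℝ (Fin d)),
      ∑ j ∈ univ.filter (fun j => blk j = i), (F z j - F w j) ^ 2 ≤ quadForm (Q i) (z - w))
    (hQhat : ∀ (i : Fin m) (j k : Fin d),
      Qhat i j k = if i ≤ blk j ∧ i ≤ blk k then Q i j k else 0)
    (hL2 : L ^ 2 = matOpNorm (∑ i, Qhat i))
    (hp : ∀ j, p j = F (WithLp.toLp 2 fun j' => if blk j' < blk j then z j' else z' j') j) :
    ‖F z - p‖ ≤ L * ‖z - z'‖ := by
  refine (pow_le_pow_iff_left₀ (norm_nonneg _) (by positivity) two_ne_zero).mp ?_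
  calc ‖F z - p‖ ^ 2 = ∑ i, ∑ j ∈ univ.filter (fun j => blk j = i), (F z j - p j) ^ 2 := by
        rw [EuclideanSpace.real_norm_sq_eq, sum_fiberwise]
        rfl
    _ ≤ ∑ i, quadForm (Qhat i) (z - z') :=
        sum_le_sum fun i _ => sum_block_sq_le_quadForm_masked hlip hQhat hp i
    _ = quadForm (∑ i, Qhat i) (z - z') := (quadForm_sum _ _ _).symm
    _ ≤ matOpNorm (∑ i, Qhat i) * ‖z - z'‖ ^ 2 := quadForm_le_matOpNorm_mul _ _
    _ = (L * ‖z - z'‖) ^ 2 := by rw [← hL2, mul_pow]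

end CyclicGradient

section Extrapolation

variable {E : Type*} [NormedAddCommGroup E] [InnerProductSpace ℝ E]

lemma real_inner_le_sq_norm_div_add {L : ℝ} (hL : 0 < L) (e w : E) :
    ⟪e, w⟫ ≤ ‖e‖ ^ 2 / (2 * L) + L / 2 * ‖w‖ ^ 2 := by
  have hamgm : ‖e‖ * ‖w‖ ≤ ‖e‖ ^ 2 / (2 * L) + L / 2 * ‖w‖ ^ 2 := by
    rw [div_add' _ _ _ (by positivity), le_div_iff₀ (by positivity)]
    nlinarith [sq_nonneg (‖e‖ - L * ‖w‖)]
  exact (real_inner_le_norm e w).trans hamgm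

variable {x f p q : ℕ → E} {a : ℕ → ℝ} {G : E → ℝ} {L : ℝ} {ψ : ℕ → E → ℝ} {u : E}

lemma extrapolatedDualAveraging_invariant (hL : 0 < L) (ha0 : a 0 = 0) (ha : Monotone a)
    (hq : ∀ n, a (n + 1) • q (n + 1) = a (n + 1) • p (n + 1) + a n • (f n - p n))
    (herr : ∀ n, ‖f (n + 1) - p (n + 1)‖ ≤ L * ‖x (n + 1) - x n‖)
    (hψ0 : ψ 0 (x 0) = 0)
    (hψ : ∀ n z, ψ (n + 1) z = ψ n z + a (n + 1) * (⟪q (n + 1), z - u⟫ + G z - G u))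
    (hsc : ∀ n z, ψ n (x n) + L * a (n + 1) * ‖z - x n‖ ^ 2 ≤ ψ n z) (n : ℕ) :
    ∑ j ∈ Icc 1 n, a j * (⟪f j, x j - u⟫ + G (x j) - G u)
      - a n * ⟪f n - p n, x n - u⟫ + a n / (2 * L) * ‖f n - p n‖ ^ 2 ≤ ψ n (x n) := by
  induction n with
  | zero => simp [ha0, hψ0]
  | succ n ih =>
    have han : 0 ≤ a n := ha0 ▸ ha (Nat.zero_le n)
    have hann : a n ≤ a (n + 1) := ha n.le_succ
    have hsplit : a (n + 1) * ⟪q (n + 1), x (n + 1) - u⟫ = a (n + 1) * ⟪f (n + 1), x (n + 1) - u⟫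
        - a (n + 1) * ⟪f (n + 1) - p (n + 1), x (n + 1) - u⟫
        + a n * ⟪f n - p n, x (n + 1) - u⟫ := by
      rw [← real_inner_smul_left, hq, inner_add_left, real_inner_smul_left, real_inner_smul_left]
      simp only [inner_sub_left]
      ring
    have hcross : a n * ⟪f n - p n, x (n + 1) - u⟫ - a n * ⟪f n - p n, x n - u⟫
        = a n * ⟪f n - p n, x (n + 1) - x n⟫ := by
      rw [← mul_sub, ← inner_sub_right, sub_sub_sub_cancel_right]
    have hyoung : -⟪f n - p n, x (n + 1) - x n⟫
        ≤ ‖f n - p n‖ ^ 2 / (2 * L) + L / 2 * ‖x (n + 1) - x n‖ ^ 2 := by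
      have := real_inner_le_sq_norm_div_add hL (f n - p n) (x n - x (n + 1))
      rwa [← neg_sub (x (n + 1)), inner_neg_right, norm_neg] at this
    have herr' : a (n + 1) / (2 * L) * ‖f (n + 1) - p (n + 1)‖ ^ 2
        ≤ a (n + 1) * L / 2 * ‖x (n + 1) - x n‖ ^ 2 := by
      have : 0 ≤ a (n + 1) / (2 * L) := div_nonneg (han.trans hann) (by positivity)
      calc a (n + 1) / (2 * L) * ‖f (n + 1) - p (n + 1)‖ ^ 2
          ≤ a (n + 1) / (2 * L) * (L * ‖x (n + 1) - x n‖) ^ 2 := by gcongr; exact herr n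
        _ = a (n + 1) * L / 2 * ‖x (n + 1) - x n‖ ^ 2 := by field_simp
    have hmono : a n * (L / 2 * ‖x (n + 1) - x n‖ ^ 2)
        ≤ a (n + 1) * (L / 2 * ‖x (n + 1) - x n‖ ^ 2) := by gcongr
    have hyoung' := mul_le_mul_of_nonneg_left hyoung han
    have hsc' := hsc n (x (n + 1))
    rw [sum_Icc_succ_top (Nat.le_add_left 1 n), hψ]
    simp only [div_eq_mul_inv] at ih hyoung' herr' hmono ⊢
    linarith

lemma extrapolatedDualAveraging_estimate (hL : 0 < L) (ha0 : a 0 = 0) (ha : Monotone a)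
    (hq : ∀ n, a (n + 1) • q (n + 1) = a (n + 1) • p (n + 1) + a n • (f n - p n))
    (herr : ∀ n, ‖f (n + 1) - p (n + 1)‖ ≤ L * ‖x (n + 1) - x n‖)
    (hψ0 : ψ 0 (x 0) = 0)
    (hψ : ∀ n z, ψ (n + 1) z = ψ n z + a (n + 1) * (⟪q (n + 1), z - u⟫ + G z - G u))
    (hsc : ∀ n z, ψ n (x n) + L * a (n + 1) * ‖z - x n‖ ^ 2 ≤ ψ n z) (n : ℕ) :
    ∑ j ∈ Icc 1 n, a j * (⟪f j, x j - u⟫ + G (x j) - G u)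
      + L * a (n + 1) / 2 * ‖u - x n‖ ^ 2 ≤ ψ n u := by
  have hinv := extrapolatedDualAveraging_invariant hL ha0 ha hq herr hψ0 hψ hsc n
  have hyoung := mul_le_mul_of_nonneg_left (real_inner_le_sq_norm_div_add hL (f n - p n) (x n - u))
    (ha0 ▸ ha (Nat.zero_le n))
  have hmono : a n * (L / 2 * ‖u - x n‖ ^ 2) ≤ a (n + 1) * (L / 2 * ‖u - x n‖ ^ 2) := by
    have := ha n.le_succ
    gcongr
  rw [norm_sub_rev (x n) u] at hyoung
  have hsc' := hsc n u
  simp only [div_eq_mul_inv] at hinv hyoung hmono ⊢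
  linarith

end Extrapolation

lemma strongConvexOn_sum_blocks {d m : ℕ} (blk : Fin d → Fin m) {γ : ℝ}
    {g : Fin m → EuclideanSpace ℝ (Fin d) → ℝ}
    (hg : ∀ i, ConvexOn ℝ Set.univ fun z : EuclideanSpace ℝ (Fin d) =>
      g i z - γ / 2 * ∑ j ∈ univ.filter (fun j => blk j = i), z j ^ 2) :
    StrongConvexOn Set.univ γ fun z => ∑ i, g i z := by
  rw [strongConvexOn_iff_convex]
  refine (convexOn_finsetSum convex_univ univ fun i _ => hg i).congr fun z _ => ?_
  simp only [sum_sub_distrib, ← mul_sum, sum_fiberwise, EuclideanSpace.real_norm_sq_eq]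

lemma smul_eq_smul_add_smul_of_extrapolation {d : ℕ} {a a' : ℝ} (ha' : a' ≠ 0)
    {q p f₀ p₀ : EuclideanSpace ℝ (Fin d)} (hq : ∀ j, q j = p j + a / a' * (f₀ j - p₀ j)) :
    a' • q = a' • p + a • (f₀ - p₀) := by
  ext j
  simp only [PiLp.add_apply, PiLp.smul_apply, PiLp.sub_apply, smul_eq_mul, hq]
  field_simp

section StepSizes

variable {γ L : ℝ} {a A : ℕ → ℝ}

lemma sum_Icc_one_eq_of_succ (hA0 : A 0 = 0) (hA : ∀ k, A (k + 1) = A k + a (k + 1)) (n : ℕ) :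
    ∑ j ∈ Icc 1 n, a j = A n := by
  induction n with
  | zero => simp [hA0]
  | succ n ih => rw [sum_Icc_succ_top (Nat.le_add_left 1 n), ih, hA]

lemma stepSum_nonneg (hγ : 0 ≤ γ) (hL : 0 < L) (hA0 : A 0 = 0)
    (ha : ∀ k, a (k + 1) = (1 + γ * A k) / (2 * L)) (hA : ∀ k, A (k + 1) = A k + a (k + 1))
    (n : ℕ) : 0 ≤ A n := by
  induction n with
  | zero => exact hA0.ge
  | succ n ih =>
    rw [hA, ha]
    have : 0 ≤ γ * A n := mul_nonneg hγ ih
    positivity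

lemma stepSize_monotone (hγ : 0 ≤ γ) (hL : 0 < L) (ha0 : a 0 = 0) (hA0 : A 0 = 0)
    (ha : ∀ k, a (k + 1) = (1 + γ * A k) / (2 * L)) (hA : ∀ k, A (k + 1) = A k + a (k + 1)) :
    Monotone a := by
  have hA' := stepSum_nonneg hγ hL hA0 ha hA
  refine monotone_nat_of_le_succ fun n => ?_
  cases n with
  | zero =>
    rw [ha0, ha, hA0]
    positivity
  | succ n =>
    rw [ha, ha, hA, ha]
    have : 0 ≤ γ * A n := mul_nonneg hγ (hA' n)
    gcongr
    linarith [(by positivity : 0 ≤ (1 + γ * A n) / (2 * L))]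

end StepSizes

theorem stmt11_general {d m : ℕ} (blk : Fin d → Fin m)
    (F : EuclideanSpace ℝ (Fin d) → EuclideanSpace ℝ (Fin d))
    (γ L : ℝ) (hγ : 0 ≤ γ) (hL : 0 < L)
    -- blockwise Lipschitz assumption
    (Q : Fin m → Matrix (Fin d) (Fin d) ℝ)
    (hlip : ∀ (i : Fin m) (z w : EuclideanSpace ℝ (Fin d)),
      ∑ j ∈ Finset.univ.filter (fun j => blk j = i), (F z j - F w j) ^ 2
        ≤ quadForm (Q i) (z - w))
    (Qhat : Fin m → Matrix (Fin d) (Fin d) ℝ)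
    (hQhat : ∀ (i : Fin m) (j k : Fin d),
      Qhat i j k = if i ≤ blk j ∧ i ≤ blk k then Q i j k else 0)
    (hL2 : L ^ 2 = matOpNorm (∑ i, Qhat i))
    -- the block components of the separable regularizer g
    (g : Fin m → EuclideanSpace ℝ (Fin d) → ℝ)
    (hgsc : ∀ i : Fin m, ConvexOn ℝ Set.univ (fun z : EuclideanSpace ℝ (Fin d) =>
      g i z - γ / 2 * ∑ j ∈ Finset.univ.filter (fun j => blk j = i), (z j) ^ 2))
    (G : EuclideanSpace ℝ (Fin d) → ℝ) (hG : ∀ z, G z = ∑ i, g i z)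
    -- step sizes
    (a A : ℕ → ℝ) (ha0 : a 0 = 0) (hA0 : A 0 = 0)
    (ha : ∀ k : ℕ, a (k + 1) = (1 + γ * A k) / (2 * L))
    (hA : ∀ k : ℕ, A (k + 1) = A k + a (k + 1))
    -- iterates, cyclic coordinate gradients, and extrapolated gradients
    (x p q : ℕ → EuclideanSpace ℝ (Fin d))
    (hp : ∀ (k : ℕ) (j : Fin d),
      p (k + 1) j = F (WithLp.toLp 2 (fun j' => if blk j' < blk j then x (k + 1) j' else x k j')) j)
    (hq : ∀ (k : ℕ) (j : Fin d),
      q (k + 1) j = p (k + 1) j + a k / a (k + 1) * (F (x k) j - p k j))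
    -- estimation sequence and its minimization property
    (ψ : ℕ → EuclideanSpace ℝ (Fin d) → EuclideanSpace ℝ (Fin d) → ℝ)
    (hψ : ∀ (k : ℕ) (z u : EuclideanSpace ℝ (Fin d)),
      ψ k z u = ∑ j ∈ Finset.Icc 1 k, a j * (⟪q j, z - u⟫ + G z - G u)
        + 1 / 2 * ‖z - x 0‖ ^ 2)
    (hxmin : ∀ k : ℕ, 1 ≤ k → ∀ u z : EuclideanSpace ℝ (Fin d), ψ k (x k) u ≤ ψ k z u) :
    ∀ (u : EuclideanSpace ℝ (Fin d)) (k : ℕ), 1 ≤ k →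
      ∑ j ∈ Finset.Icc 1 k, a j * (⟪F (x j), x j - u⟫ + G (x j) - G u)
        + (1 + γ * A k) / 4 * ‖u - x k‖ ^ 2
        ≤ 1 / 2 * ‖u - x 0‖ ^ 2 := by
  intro u k _
  have hmono := stepSize_monotone hγ hL ha0 hA0 ha hA
  have hLa : ∀ n, L * a (n + 1) = (1 + γ * A n) / 2 := fun n => by rw [ha]; field_simp
  have hqvec : ∀ n, a (n + 1) • q (n + 1) = a (n + 1) • p (n + 1) + a n • (F (x n) - p n) := by
    intro n
    have := stepSum_nonneg hγ hL hA0 ha hA n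
    exact smul_eq_smul_add_smul_of_extrapolation (by rw [ha]; positivity) (hq n)
  have herr : ∀ n, ‖F (x (n + 1)) - p (n + 1)‖ ≤ L * ‖x (n + 1) - x n‖ := fun n =>
    norm_sub_le_of_blockLipschitz hL.le hlip hQhat hL2 (hp n)
  have hψsucc : ∀ n z, ψ (n + 1) z u = ψ n z u + a (n + 1) * (⟪q (n + 1), z - u⟫ + G z - G u) :=
    fun n z => by rw [hψ, hψ, sum_Icc_succ_top (Nat.le_add_left 1 n)]; ring
  have hGsc : StrongConvexOn Set.univ γ G := funext hG ▸ strongConvexOn_sum_blocks blk hgsc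
  have hsc : ∀ n z, ψ n (x n) u + L * a (n + 1) * ‖z - x n‖ ^ 2 ≤ ψ n z u := by
    intro n z
    have hconv : StrongConvexOn Set.univ (1 + γ * A n) (ψ n · u) := by
      rw [funext fun z => hψ n z u, ← sum_Icc_one_eq_of_succ hA0 hA n]
      exact hGsc.dualAveragingObjective (fun j => ha0 ▸ hmono j.zero_le) q (x 0) u n
    have hmin : ∀ z, ψ n (x n) u ≤ ψ n z u := by
      rcases n with _ | n
      · simp [hψ]
      · exact hxmin (n + 1) n.succ_pos u
    rw [hLa]
    exact hconv.add_sq_norm_sub_le_of_isMinOn trivial trivial (isMinOn_univ_iff.mpr hmin)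
  have hψ0 : ψ 0 (x 0) u = 0 := by simp [hψ]
  have key := extrapolatedDualAveraging_estimate (ψ := (ψ · · u)) hL ha0 hmono hqvec herr hψ0
    hψsucc hsc k
  have hcoef : L * a (k + 1) / 2 = (1 + γ * A k) / 4 := by rw [hLa]; ring
  rwa [hcoef, show ψ k u u = 1 / 2 * ‖u - x 0‖ ^ 2 by simp [hψ]] at key

/-- **Statement 11** (Theorem 1, main inequality). Under the CODER iteration with
`F` monotone and satisfying the blockwise Lipschitz assumption, and with
`L² = ‖∑ᵢ Q̂ⁱ‖` used in the step sizes `a_k = (1+γA_{k−1})/(2L)`, for every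
`u ∈ ℝ^d` and every `k ≥ 1`:
`∑_{j=1}^k a_j(⟨F(x_j), x_j − u⟩ + g(x_j) − g(u)) + ((1+γA_k)/4)‖u − x_k‖²
  ≤ ½‖u − x₀‖²`. -/
theorem stmt11 {d m : ℕ} (blk : Fin d → Fin m) (hblk : Monotone blk)
    (F : EuclideanSpace ℝ (Fin d) → EuclideanSpace ℝ (Fin d))
    (γ L : ℝ) (hγ : 0 ≤ γ) (hL : 0 < L)
    -- blockwise Lipschitz assumption
    (Q : Fin m → Matrix (Fin d) (Fin d) ℝ)
    (hpsd : ∀ i, (Q i).PosSemidef)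
    (hlip : ∀ (i : Fin m) (z w : EuclideanSpace ℝ (Fin d)),
      ∑ j ∈ Finset.univ.filter (fun j => blk j = i), (F z j - F w j) ^ 2
        ≤ quadForm (Q i) (z - w))
    (Qhat : Fin m → Matrix (Fin d) (Fin d) ℝ)
    (hQhat : ∀ (i : Fin m) (j k : Fin d),
      Qhat i j k = if i ≤ blk j ∧ i ≤ blk k then Q i j k else 0)
    (hL2 : L ^ 2 = matOpNorm (∑ i, Qhat i))
    -- the block components of the separable regularizer g
    (g : Fin m → EuclideanSpace ℝ (Fin d) → ℝ)
    (hgdep : ∀ (i : Fin m) (z w : EuclideanSpace ℝ (Fin d)),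
      (∀ j, blk j = i → z j = w j) → g i z = g i w)
    (hgsc : ∀ i : Fin m, ConvexOn ℝ Set.univ (fun z : EuclideanSpace ℝ (Fin d) =>
      g i z - γ / 2 * ∑ j ∈ Finset.univ.filter (fun j => blk j = i), (z j) ^ 2))
    (G : EuclideanSpace ℝ (Fin d) → ℝ) (hG : ∀ z, G z = ∑ i, g i z)
    -- step sizes
    (a A : ℕ → ℝ) (ha0 : a 0 = 0) (hA0 : A 0 = 0)
    (ha : ∀ k : ℕ, a (k + 1) = (1 + γ * A k) / (2 * L))
    (hA : ∀ k : ℕ, A (k + 1) = A k + a (k + 1))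
    -- iterates, cyclic coordinate gradients, and extrapolated gradients
    (x p q : ℕ → EuclideanSpace ℝ (Fin d))
    (hp0 : p 0 = F (x 0))
    (hp : ∀ (k : ℕ) (j : Fin d),
      p (k + 1) j = F (WithLp.toLp 2 (fun j' => if blk j' < blk j then x (k + 1) j' else x k j')) j)
    (hq : ∀ (k : ℕ) (j : Fin d),
      q (k + 1) j = p (k + 1) j + a k / a (k + 1) * (F (x k) j - p k j))
    -- estimation sequence and its minimization property
    (ψ : ℕ → EuclideanSpace ℝ (Fin d) → EuclideanSpace ℝ (Fin d) → ℝ)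
    (hψ : ∀ (k : ℕ) (z u : EuclideanSpace ℝ (Fin d)),
      ψ k z u = ∑ j ∈ Finset.Icc 1 k, a j * (⟪q j, z - u⟫ + G z - G u)
        + 1 / 2 * ‖z - x 0‖ ^ 2)
    -- monotonicity of F
    (hmonoF : ∀ z w : EuclideanSpace ℝ (Fin d), 0 ≤ ⟪F z - F w, z - w⟫)
    (hxmin : ∀ k : ℕ, 1 ≤ k → ∀ u z : EuclideanSpace ℝ (Fin d), ψ k (x k) u ≤ ψ k z u) :
    ∀ (u : EuclideanSpace ℝ (Fin d)) (k : ℕ), 1 ≤ k →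
      ∑ j ∈ Finset.Icc 1 k, a j * (⟪F (x j), x j - u⟫ + G (x j) - G u)
        + (1 + γ * A k) / 4 * ‖u - x k‖ ^ 2
        ≤ 1 / 2 * ‖u - x 0‖ ^ 2 :=
  stmt11_general blk F γ L hγ hL Q hlip Qhat hQhat hL2 g hgsc G hG a A ha0 hA0 ha hA x p q hp hq ψ
    hψ hxmin
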